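/- Define the log-evidence L(α, β; F, y) = (n/2)log β + (D/2)log α - (n/2)log 2π - (β/2)‖Fm - y‖₂² - (α/2)mᵀm - (1/2)log det(A), where A = αI_D + βFᵀF and m = βA⁻¹Fᵀy, for F ∈ ℝ^{n×D}, y ∈ ℝⁿ, α, β > 0. If F̃ = [F, 0] ∈ ℝ^{n×(D+d)} is F padded with d zero columns, then L(α, β; F̃, y) = L(α, β; F, y) for all α, β > 0. -/

import Mathlib

open Matrix

/-- The log-evidence `L(α, β; F, y)` of the Bayesian linear model. -/
noncomputable def logEvidence {ι κ : Type*} [Fintype ι] [Fintype κ] [DecidableEq κ]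
    (F : Matrix ι κ ℝ) (y : ι → ℝ) (α β : ℝ) : ℝ :=
  let A := α • (1 : Matrix κ κ ℝ) + β • (Fᵀ * F)
  let m := β • (A⁻¹ *ᵥ (Fᵀ *ᵥ y))
  (Fintype.card ι : ℝ) / 2 * Real.log β + (Fintype.card κ : ℝ) / 2 * Real.log α -
    (Fintype.card ι : ℝ) / 2 * Real.log (2 * Real.pi) -
    β / 2 * ((F *ᵥ m - y) ⬝ᵥ (F *ᵥ m - y)) - α / 2 * (m ⬝ᵥ m) -
    1 / 2 * Real.log A.det

lemma aux_posDef {D : ℕ} (n : ℕ) (F : Matrix (Fin n) (Fin D) ℝ) {α β : ℝ}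
    (hα : 0 < α) (hβ : 0 < β) :
    (α • (1 : Matrix (Fin D) (Fin D) ℝ) + β • (Fᵀ * F)).PosDef := by
  have h1 : (α • (1 : Matrix (Fin D) (Fin D) ℝ)).PosDef := by
    rw [Matrix.smul_one_eq_diagonal]
    exact Matrix.posDef_diagonal_iff.mpr fun _ => hα
  have h2 : (β • (Fᵀ * F)).PosSemidef := by
    have hps : (Fᵀ * F).PosSemidef := by
      have := Matrix.posSemidef_conjTranspose_mul_self F
      simpa [Matrix.conjTranspose_eq_transpose_of_trivial] using this
    refine ⟨?_, fun x => ?_⟩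
    · show (β • (Fᵀ * F))ᴴ = β • (Fᵀ * F)
      rw [Matrix.conjTranspose_smul]
      simp [hps.1]
    · have := hps.2 x
      exact (hps.smul hβ.le).2 x
  exact h1.add_posSemidef h2

theorem logEvidence_padding_invariant (n D d : ℕ)
    (F : Matrix (Fin n) (Fin D) ℝ) (y : Fin n → ℝ)
    (α β : ℝ) (hα : 0 < α) (hβ : 0 < β) :
    logEvidence (Matrix.fromCols F (0 : Matrix (Fin n) (Fin d) ℝ)) y α β =
      logEvidence F y α β := by
  set A := α • (1 : Matrix (Fin D) (Fin D) ℝ) + β • (Fᵀ * F) with hA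
  have hApd := aux_posDef n F hα hβ
  rw [← hA] at hApd
  have hAdet : 0 < A.det := hApd.det_pos
  have hAinv : IsUnit A.det := hAdet.ne'.isUnit
  -- the padded Gram matrix
  have hgram : (Matrix.fromCols F (0 : Matrix (Fin n) (Fin d) ℝ))ᵀ *
      Matrix.fromCols F (0 : Matrix (Fin n) (Fin d) ℝ) =
      Matrix.fromBlocks (Fᵀ * F) 0 0 0 := by
    rw [Matrix.transpose_fromCols, Matrix.fromRows_mul_fromCols]
    simp
  set At := α • (1 : Matrix (Fin D ⊕ Fin d) (Fin D ⊕ Fin d) ℝ) +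
      β • ((Matrix.fromCols F (0 : Matrix (Fin n) (Fin d) ℝ))ᵀ *
        Matrix.fromCols F (0 : Matrix (Fin n) (Fin d) ℝ)) with hAt
  have hAtblocks : At = Matrix.fromBlocks A 0 0 (α • 1) := by
    rw [hAt, hgram, ← Matrix.fromBlocks_one, Matrix.fromBlocks_smul, Matrix.fromBlocks_smul,
      Matrix.fromBlocks_add, hA]
    congr 1 <;> simp
  -- inverse of the padded matrix
  have hAtinv : At⁻¹ = Matrix.fromBlocks A⁻¹ 0 0 (α⁻¹ • 1) := by
    apply Matrix.inv_eq_right_inv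
    rw [hAtblocks, Matrix.fromBlocks_multiply, ← Matrix.fromBlocks_one]
    congr 1 <;>
      simp [Matrix.mul_nonsing_inv A hAinv, smul_smul, mul_inv_cancel₀ hα.ne',
        inv_mul_cancel₀ hα.ne']
  set m := β • (A⁻¹ *ᵥ (Fᵀ *ᵥ y)) with hm
  have hFty : (Matrix.fromCols F (0 : Matrix (Fin n) (Fin d) ℝ))ᵀ *ᵥ y =
      Sum.elim (Fᵀ *ᵥ y) 0 := by
    rw [Matrix.transpose_fromCols, Matrix.fromRows_mulVec]
    simp
  have hmt : β • (At⁻¹ *ᵥ ((Matrix.fromCols F (0 : Matrix (Fin n) (Fin d) ℝ))ᵀ *ᵥ y)) =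
      Sum.elim m 0 := by
    rw [hFty, hAtinv, Matrix.fromBlocks_mulVec]
    ext (i | i) <;> simp [hm]
  unfold logEvidence
  simp only [hmt, ← hAt, ← hA, ← hm]
  have hFm : Matrix.fromCols F (0 : Matrix (Fin n) (Fin d) ℝ) *ᵥ Sum.elim m 0 = F *ᵥ m := by
    rw [Matrix.fromCols_mulVec_sumElim]; simp
  have hmm : Sum.elim m (0 : Fin d → ℝ) ⬝ᵥ Sum.elim m 0 = m ⬝ᵥ m := by
    rw [sumElim_dotProduct_sumElim]; simp
  have hdet : At.det = A.det * α ^ d := by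
    rw [hAtblocks, Matrix.det_fromBlocks_zero₂₁]
    congr 1
    rw [Matrix.smul_one_eq_diagonal, Matrix.det_diagonal]
    simp
  have hlog : Real.log At.det = Real.log A.det + d * Real.log α := by
    rw [hdet, Real.log_mul hAdet.ne' (pow_ne_zero _ hα.ne'), Real.log_pow]
  rw [hFm, hmm, hlog]
  simp only [Fintype.card_sum, Fintype.card_fin]
  push_cast
  ring
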